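/- arXiv:2402.07747 — 2 statements merged into one kernel-verified Lean document; each statement's English description precedes it below -/
import Mathlib

section
/- Let p be an everywhere positive, continuously differentiable probability density on ℝ^d whose score s = ∇ log p is L-Lipschitz, and for h > 0 let p_h be the density of p * N(0, h I_d). Then for every y ∈ ℝ^d, p(y)/p_h(y) ≤ exp(d L h / 2). -/
/-!
Since `∇ log p` is `L`-Lipschitz, `log p (y - z) ≥ log p y - ⟪∇ log p y, z⟫ - L ‖z‖² / 2`.
Integrating `p (y - z)` against `N(0, h I_d)` thus bounds `p_h y` below by `p y` times a Gaussian
integral of `exp (-⟪∇ log p y, z⟫ - L ‖z‖² / 2)`, which equals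
`(1 + L h) ^ (-d/2) exp (h ‖∇ log p y‖² / (2 (1 + L h)))`, and this is at least
`(1 + L h) ^ (-d/2) ≥ exp (-d L h / 2)`.
-/

open MeasureTheory Real
open scoped RealInnerProductSpace ENNReal

noncomputable section

abbrev Vec (d : ℕ) := EuclideanSpace ℝ (Fin d)

/-- Density at `x` of the Gaussian `N(c, h I_d)` on `ℝ^d`. -/
def gaussD (d : ℕ) (h : ℝ) (c x : Vec d) : ℝ :=
  (2 * π * h) ^ (-(d : ℝ) / 2) * Real.exp (-‖x - c‖ ^ 2 / (2 * h))

/-- Density of `μ * N(0, h I_d)` for a measure `μ`. -/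
def convD (d : ℕ) (μ : Measure (Vec d)) (h : ℝ) (x : Vec d) : ℝ :=
  ∫ u, gaussD d h u x ∂μ

/-- Density of `p * N(0, h I_d)` for a density function `p`. -/
def densConvD (d : ℕ) (p : Vec d → ℝ) (h : ℝ) (y : Vec d) : ℝ :=
  ∫ z, p (y - z) * gaussD d h 0 z

/-- Density of the Gaussian mixture `(1/n) ∑ᵢ N(Xᵢ, h I_d)`. -/
def mixD (d n : ℕ) (X : Fin n → Vec d) (h : ℝ) (x : Vec d) : ℝ :=
  (n : ℝ)⁻¹ * ∑ i, gaussD d h (X i) x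

/-- Score function `∇ log f`. -/
def scoreFn (d : ℕ) (f : Vec d → ℝ) (x : Vec d) : Vec d :=
  gradient (fun y => Real.log (f y)) x

/-- Regularized score `∇f / max(f, ε)`. -/
def regScore (d : ℕ) (f : Vec d → ℝ) (ε : ℝ) (x : Vec d) : Vec d :=
  (max (f x) ε)⁻¹ • gradient f x

/-- Score matching loss `∫ ‖s₁ - s₂‖² f`. -/
def scoreLoss (d : ℕ) (s₁ s₂ : Vec d → Vec d) (f : Vec d → ℝ) : ℝ :=
  ∫ x, ‖s₁ x - s₂ x‖ ^ 2 * f x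

/-- Squared Hellinger distance between densities. -/
def hellSq (d : ℕ) (p q : Vec d → ℝ) : ℝ :=
  ∫ x, (Real.sqrt (p x) - Real.sqrt (q x)) ^ 2

/-- Mean vector of a measure. -/
def meanVec (d : ℕ) (μ : Measure (Vec d)) : Vec d :=
  ∫ y, y ∂μ

/-- `μ` is `α`-subgaussian: `E[exp⟨θ, X - E X⟩] ≤ exp(α²‖θ‖²/2)` for all `θ`. -/
def IsSubgaussianMeasure (d : ℕ) (μ : Measure (Vec d)) (α : ℝ) : Prop :=
  ∀ θ : Vec d, ∫ x, Real.exp ⟪θ, x - meanVec d μ⟫ ∂μ ≤ Real.exp (α ^ 2 * ‖θ‖ ^ 2 / 2)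

/-- Quadratic form of the Hessian of `g` at `x` applied to `v`. -/
def hessQ (d : ℕ) (g : Vec d → ℝ) (x v : Vec d) : ℝ :=
  iteratedFDeriv ℝ 2 g x ![v, v]

open scoped NNReal

section GaussianIntegral

variable {V : Type*} [NormedAddCommGroup V] [InnerProductSpace ℝ V] [FiniteDimensional ℝ V]
  [MeasurableSpace V] [BorelSpace V]

theorem integrable_rexp_neg_mul_sq_norm_add_inner {b : ℝ} (hb : 0 < b) (w : V) :
    Integrable fun v : V ↦ rexp (-b * ‖v‖ ^ 2 + ⟪w, v⟫) := by
  have h := (GaussianFourier.integrable_cexp_neg_mul_sq_norm_add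
    (show 0 < (b : ℂ).re from hb) 1 w).re
  refine h.congr (Filter.Eventually.of_forall fun v ↦ ?_)
  have hreal : (-(b : ℂ) * (‖v‖ : ℂ) ^ 2 + 1 * (⟪w, v⟫ : ℂ)) =
      ((-b * ‖v‖ ^ 2 + ⟪w, v⟫ : ℝ) : ℂ) := by
    push_cast; ring
  simp only [hreal, RCLike.re_to_complex, Complex.exp_ofReal_re]

theorem integral_rexp_neg_mul_sq_norm_add_inner {b : ℝ} (hb : 0 < b) (w : V) :
    ∫ v : V, rexp (-b * ‖v‖ ^ 2 + ⟪w, v⟫) =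
      (π / b) ^ (Module.finrank ℝ V / 2 : ℝ) * rexp (‖w‖ ^ 2 / (4 * b)) := by
  have h := GaussianFourier.integral_cexp_neg_mul_sq_norm_add
    (show 0 < (b : ℂ).re from hb) 1 w
  rw [← Complex.ofReal_inj, ← integral_complex_ofReal]
  push_cast
  simp only [one_mul, one_pow] at h
  rw [h, Complex.ofReal_cpow (by positivity)]
  push_cast
  ring_nf

end GaussianIntegral

section LipschitzGradient

variable {E : Type*} [NormedAddCommGroup E] [InnerProductSpace ℝ E] [CompleteSpace E]

theorem add_inner_gradient_sub_le_of_lipschitzWith {f : E → ℝ} {K : ℝ≥0}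
    (hf : Differentiable ℝ f) (hK : LipschitzWith K (gradient f)) (x v : E) :
    f x + ⟪gradient f x, v⟫ - K / 2 * ‖v‖ ^ 2 ≤ f (x + v) := by
  set ψ : ℝ → ℝ := fun t ↦ f (x + t • v) - t * ⟪gradient f x, v⟫ + K / 2 * ‖v‖ ^ 2 * t ^ 2
  have hψ : ∀ t, HasDerivAt ψ
      (⟪gradient f (x + t • v) - gradient f x, v⟫ + K * ‖v‖ ^ 2 * t) t := by
    intro t
    have hline : HasDerivAt (fun t : ℝ ↦ x + t • v) v t := by
      simpa using ((hasDerivAt_id t).smul_const v).const_add x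
    have hf' := ((hf _).hasGradientAt.hasFDerivAt).comp_hasDerivAt t hline
    have := ((hf'.sub ((hasDerivAt_id t).mul_const ⟪gradient f x, v⟫)).add
      ((hasDerivAt_pow 2 t).const_mul (K / 2 * ‖v‖ ^ 2)))
    refine this.congr_deriv ?_
    simp only [InnerProductSpace.toDual_apply_apply, inner_sub_left]
    push_cast
    ring
  have hψ_nonneg : ∀ t ∈ interior (Set.Icc (0 : ℝ) 1),
      0 ≤ ⟪gradient f (x + t • v) - gradient f x, v⟫ + K * ‖v‖ ^ 2 * t := by
    intro t ht
    rw [interior_Icc] at ht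
    have hdist : ‖gradient f (x + t • v) - gradient f x‖ ≤ K * (t * ‖v‖) := by
      simpa [dist_eq_norm, norm_smul, abs_of_pos ht.1] using hK.dist_le_mul (x + t • v) x
    have hinner := neg_le_of_abs_le
      (abs_real_inner_le_norm (gradient f (x + t • v) - gradient f x) v)
    nlinarith [norm_nonneg v]
  have hmono : MonotoneOn ψ (Set.Icc 0 1) :=
    monotoneOn_of_hasDerivWithinAt_nonneg (convex_Icc 0 1)
      (fun t _ ↦ (hψ t).continuousAt.continuousWithinAt)
      (fun t _ ↦ (hψ t).hasDerivWithinAt) hψ_nonneg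
  have hψ01 := hmono (by simp) (by simp) zero_le_one
  simp only [ψ, zero_smul, add_zero, zero_mul, sub_zero, one_smul, one_mul, one_pow,
    mul_one] at hψ01
  linarith

theorem mul_exp_le_of_lipschitzWith_gradient_log {p : E → ℝ} {K : ℝ≥0}
    (hpos : ∀ x, 0 < p x) (hp : Differentiable ℝ p)
    (hK : LipschitzWith K (gradient fun x ↦ log (p x))) (y z : E) :
    p y * rexp (⟪-gradient (fun x ↦ log (p x)) y, z⟫ - K / 2 * ‖z‖ ^ 2) ≤ p (y - z) := by
  have hlog : Differentiable ℝ fun x ↦ log (p x) := fun x ↦ (hp x).log (hpos x).ne'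
  have h := add_inner_gradient_sub_le_of_lipschitzWith hlog hK y (-z)
  rw [← sub_eq_add_neg, inner_neg_right, norm_neg] at h
  rw [inner_neg_left, ← exp_log (hpos y), ← exp_add, ← exp_log (hpos (y - z))]
  exact exp_le_exp.mpr (by linarith)

end LipschitzGradient

theorem exp_neg_mul_le_one_add_rpow_neg {x r : ℝ} (hx : 0 ≤ x) (hr : 0 ≤ r) :
    rexp (-(r * x)) ≤ (1 + x) ^ (-r) := by
  rw [rpow_neg (by linarith), exp_neg, mul_comm, exp_mul]
  gcongr
  linarith [add_one_le_exp x]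

section GaussianDensity

variable {d : ℕ} {h : ℝ}

theorem continuous_gaussD (c : Vec d) : Continuous (gaussD d h c) := by
  unfold gaussD
  fun_prop

theorem gaussD_le (hh : 0 ≤ h) (c x : Vec d) : gaussD d h c x ≤ (2 * π * h) ^ (-(d : ℝ) / 2) := by
  unfold gaussD
  refine mul_le_of_le_one_right (by positivity) (exp_le_one_iff.mpr ?_)
  exact div_nonpos_of_nonpos_of_nonneg (neg_nonpos.mpr (sq_nonneg _)) (by positivity)

theorem exp_mul_gaussD_eq (hh : 0 < h) (c : ℝ) (w z : Vec d) :
    rexp (⟪w, z⟫ - c / 2 * ‖z‖ ^ 2) * gaussD d h 0 z =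
      (2 * π * h) ^ (-(d : ℝ) / 2) * rexp (-((1 + c * h) / (2 * h)) * ‖z‖ ^ 2 + ⟪w, z⟫) := by
  rw [gaussD, sub_zero, mul_left_comm, ← exp_add]
  congr 2
  field_simp
  ring

theorem integrable_exp_mul_gaussD (hh : 0 < h) {c : ℝ} (hc : 0 < 1 + c * h) (w : Vec d) :
    Integrable fun z ↦ rexp (⟪w, z⟫ - c / 2 * ‖z‖ ^ 2) * gaussD d h 0 z := by
  simp_rw [exp_mul_gaussD_eq hh]
  exact (integrable_rexp_neg_mul_sq_norm_add_inner (by positivity) w).const_mul _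

theorem integral_exp_mul_gaussD (hh : 0 < h) {c : ℝ} (hc : 0 < 1 + c * h) (w : Vec d) :
    ∫ z, rexp (⟪w, z⟫ - c / 2 * ‖z‖ ^ 2) * gaussD d h 0 z =
      (1 + c * h) ^ (-(d : ℝ) / 2) * rexp (h * ‖w‖ ^ 2 / (2 * (1 + c * h))) := by
  simp_rw [exp_mul_gaussD_eq hh]
  rw [integral_const_mul, integral_rexp_neg_mul_sq_norm_add_inner (by positivity),
    finrank_euclideanSpace_fin, ← mul_assoc]
  have hπ : π / ((1 + c * h) / (2 * h)) = 2 * π * h / (1 + c * h) := by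
    field_simp
  congr 1
  · rw [hπ, div_rpow (by positivity) hc.le, neg_div, rpow_neg (by positivity),
      rpow_neg hc.le]
    field_simp
  · congr 1
    field_simp
    ring

theorem integrable_mul_gaussD {f : Vec d → ℝ} (hf : Integrable f) (hh : 0 ≤ h) :
    Integrable fun z ↦ f z * gaussD d h 0 z :=
  hf.mul_bdd (continuous_gaussD 0).aestronglyMeasurable <| Filter.Eventually.of_forall fun z ↦ by
    rw [norm_of_nonneg (by unfold gaussD; positivity)]
    exact gaussD_le hh 0 z

theorem mul_one_add_rpow_neg_le_densConvD {p : Vec d → ℝ} {K : ℝ≥0} (hpos : ∀ x, 0 < p x)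
    (hp : Differentiable ℝ p) (hp_int : Integrable p) (hK : LipschitzWith K (scoreFn d p))
    (hh : 0 < h) (y : Vec d) :
    p y * (1 + K * h) ^ (-(d : ℝ) / 2) ≤ densConvD d p h y := by
  set w := -scoreFn d p y
  have hKh : 0 < 1 + K * h := by positivity
  calc p y * (1 + K * h) ^ (-(d : ℝ) / 2)
      ≤ p y * ((1 + K * h) ^ (-(d : ℝ) / 2) * rexp (h * ‖w‖ ^ 2 / (2 * (1 + K * h)))) := by
        refine mul_le_mul_of_nonneg_left ?_ (hpos y).le
        refine le_mul_of_one_le_right ?_ (one_le_exp ?_) <;> positivity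
    _ = ∫ z, p y * (rexp (⟪w, z⟫ - K / 2 * ‖z‖ ^ 2) * gaussD d h 0 z) := by
        rw [integral_const_mul, integral_exp_mul_gaussD hh hKh]
    _ ≤ ∫ z, p (y - z) * gaussD d h 0 z := by
        refine integral_mono ((integrable_exp_mul_gaussD hh hKh w).const_mul _)
          (integrable_mul_gaussD ((integrable_comp_sub_left p y).mpr hp_int) hh.le) fun z ↦ ?_
        rw [← mul_assoc]
        exact mul_le_mul_of_nonneg_right
          (mul_exp_le_of_lipschitzWith_gradient_log hpos hp hK y z) (by unfold gaussD; positivity)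

end GaussianDensity

theorem density_ratio_bound_general (d : ℕ) (p : Vec d → ℝ) (L h : ℝ)
    (hpos : ∀ x, 0 < p x) (hC1 : ContDiff ℝ 1 p) (hint : ∫ x, p x = 1)
    (hL : 0 ≤ L) (hlip : LipschitzWith L.toNNReal (scoreFn d p)) (hh : 0 < h) :
    ∀ y : Vec d, p y / densConvD d p h y ≤ Real.exp ((d : ℝ) * L * h / 2) := by
  intro y
  have hp_int : Integrable p := Integrable.of_integral_ne_zero (by simp [hint])
  have hsmoothed := mul_one_add_rpow_neg_le_densConvD hpos (hC1.differentiable one_ne_zero)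
    hp_int hlip hh y
  rw [Real.coe_toNNReal L hL] at hsmoothed
  have hexp : rexp (-((d : ℝ) * L * h / 2)) ≤ (1 + L * h) ^ (-(d : ℝ) / 2) := by
    rw [show (d : ℝ) * L * h / 2 = d / 2 * (L * h) by ring, neg_div]
    exact exp_neg_mul_le_one_add_rpow_neg (by positivity) (by positivity)
  have hlower : p y * rexp (-((d : ℝ) * L * h / 2)) ≤ densConvD d p h y :=
    (mul_le_mul_of_nonneg_left hexp (hpos y).le).trans hsmoothed
  have hconv_pos : 0 < densConvD d p h y := (mul_pos (hpos y) (exp_pos _)).trans_le hlower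
  rw [div_le_iff₀ hconv_pos]
  calc p y = p y * rexp (-((d : ℝ) * L * h / 2)) * rexp ((d : ℝ) * L * h / 2) := by
        rw [mul_assoc, ← exp_add, neg_add_cancel, exp_zero, mul_one]
    _ ≤ densConvD d p h y * rexp ((d : ℝ) * L * h / 2) := by gcongr
    _ = rexp ((d : ℝ) * L * h / 2) * densConvD d p h y := mul_comm _ _

/-- Pointwise bound on the ratio of a density with Lipschitz score
to its Gaussian smoothing: `p(y)/p_h(y) ≤ exp(dLh/2)`. -/
theorem density_ratio_bound (d : ℕ) (hd : 1 ≤ d) (p : Vec d → ℝ) (L h : ℝ)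
    (hpos : ∀ x, 0 < p x) (hC1 : ContDiff ℝ 1 p) (hint : ∫ x, p x = 1)
    (hL : 0 ≤ L) (hlip : LipschitzWith L.toNNReal (scoreFn d p)) (hh : 0 < h) :
    ∀ y : Vec d, p y / densConvD d p h y ≤ Real.exp ((d : ℝ) * L * h / 2) :=
  density_ratio_bound_general d p L h hpos hC1 hint hL hlip hh
end
end

section
/- Let ρ be a probability density on ℝ^d with finite second moment such that ρ(x) ∝ e^{−f(x)} with f twice continuously differentiable and ∇²f(x) ⪯ L I_d for all x ∈ ℝ^d (equivalently, −∇² log ρ(x) ⪯ L I_d for all x). Then the covariance matrix of ρ satisfies Cov_ρ(X) ⪰ (1/L) I_d. -/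
open MeasureTheory Real
open scoped RealInnerProductSpace ENNReal

noncomputable section

/-
Proof idea (Cramér–Rao along lines). Fix a unit vector `v` and restrict `ρ = e^{-g}` to a line
`t ↦ x₀ + t v`, where it is `q = e^{-G}` with `G'' ≤ L`. Integrating by parts,
`∫ G' (t - a) q = ∫ q` and `∫ G'² q = ∫ G'' q ≤ L ∫ q`; the boundary terms `G' q = -q'` of the
second identity are not known to vanish, but they can be made small along suitable sequences of
endpoints because `q ≥ 0` is integrable. The AM-GM inequality `2 G' (t - a) ≤ G'² / L + L (t - a)²`
then gives `∫ q ≤ L ∫ (t - a)² q` on every line, and Fubini over the lines parallel to `v` gives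
`∫ ρ ≤ L ∫ ⟪v, x - m⟫² ρ`.
-/

open Filter

theorem MeasureTheory.Integrable.mul_of_sq_mul {α : Type*} [MeasurableSpace α] {μ : Measure α}
    {f g w : α → ℝ} (hf : Integrable (fun x => f x ^ 2 * w x) μ)
    (hg : Integrable (fun x => g x ^ 2 * w x) μ) (hw : ∀ x, 0 ≤ w x)
    (hm : AEStronglyMeasurable (fun x => f x * g x * w x) μ) :
    Integrable (fun x => f x * g x * w x) μ := by
  refine (hf.add hg).mono hm (ae_of_all _ fun x => ?_)
  have hfg := two_mul_le_add_sq |f x| |g x|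
  rw [sq_abs, sq_abs] at hfg
  have hsum : 0 ≤ f x ^ 2 * w x + g x ^ 2 * w x := by positivity [hw x]
  simp only [Pi.add_apply, Real.norm_eq_abs, abs_mul, abs_of_nonneg (hw x), abs_of_nonneg hsum]
  nlinarith [hw x, abs_nonneg (f x), abs_nonneg (g x)]

theorem exists_gt_deriv_lt_of_integrable {q q' : ℝ → ℝ} (hq : Integrable q) (hq0 : ∀ t, 0 ≤ q t)
    (hderiv : ∀ t, HasDerivAt q (q' t) t) {ε : ℝ} (hε : 0 < ε) (T : ℝ) :
    ∃ b, T < b ∧ q' b < ε := by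
  by_contra! hge
  -- otherwise `q` grows at least linearly on `(T, ∞)`, so `1 ≤ q` on a half-line
  have hmono : MonotoneOn (fun t => q t - ε * t) (Set.Ioi T) := by
    refine monotoneOn_of_hasDerivWithinAt_nonneg (convex_Ioi T)
      (fun t _ => ((hderiv t).continuousAt.sub (continuousAt_const.mul continuousAt_id))
        |>.continuousWithinAt) (fun t _ => ((hderiv t).sub ((hasDerivAt_id t).const_mul ε))
          |>.hasDerivWithinAt) fun t ht => ?_
    rw [interior_Ioi] at ht
    simpa using hge t ht
  have hbig : Set.Ici (T + 1 + ε⁻¹) ⊆ {t | 1 ≤ ‖q t‖} := by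
    intro s hs
    have hs : T + 1 + ε⁻¹ ≤ s := hs
    have hε' := inv_pos.2 hε
    have hgrowth := hmono (by simp : T + 1 ∈ Set.Ioi T) (by simp only [Set.mem_Ioi]; linarith)
      (by linarith)
    have hlin : 1 ≤ ε * (s - (T + 1)) := by
      calc (1 : ℝ) = ε * ε⁻¹ := (mul_inv_cancel₀ hε.ne').symm
        _ ≤ ε * (s - (T + 1)) := by gcongr; linarith
    simp only [Set.mem_ofPred_eq, Real.norm_eq_abs, abs_of_nonneg (hq0 s)]
    nlinarith [hq0 (T + 1)]
  have hfinite := (measure_mono hbig).trans_lt (hq.measure_norm_ge_lt_top one_pos)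
  simp at hfinite

theorem exists_lt_neg_lt_deriv_of_integrable {q q' : ℝ → ℝ} (hq : Integrable q) (hq0 : ∀ t, 0 ≤ q t)
    (hderiv : ∀ t, HasDerivAt q (q' t) t) {ε : ℝ} (hε : 0 < ε) (T : ℝ) :
    ∃ a, a < T ∧ -ε < q' a := by
  obtain ⟨b, hb, hq'b⟩ := exists_gt_deriv_lt_of_integrable hq.comp_neg (fun t => hq0 (-t))
    (fun t => (hderiv (-t)).scomp t (hasDerivAt_neg t)) hε (-T)
  exact ⟨-b, by linarith, by simp at hq'b; linarith⟩

section OneDimensional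

variable {G G' G'' : ℝ → ℝ}

theorem hasDerivAt_exp_neg (hG : ∀ t, HasDerivAt G (G' t) t) (t : ℝ) :
    HasDerivAt (fun s => exp (-G s)) (-(G' t * exp (-G t))) t := by
  simpa [mul_comm] using (hG t).neg.exp

theorem intervalIntegral_deriv_sq_mul_exp_neg_le {L : ℝ} (hL : 0 ≤ L)
    (hG : ∀ t, HasDerivAt G (G' t) t) (hG' : ∀ t, HasDerivAt G' (G'' t) t)
    (hG''cont : Continuous G'') (hG''le : ∀ t, G'' t ≤ L)
    (hq : Integrable fun t => exp (-G t)) {a b : ℝ} (hab : a ≤ b) :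
    ∫ t in a..b, G' t ^ 2 * exp (-G t) ≤
      L * (∫ t, exp (-G t)) + G' a * exp (-G a) - G' b * exp (-G b) := by
  set q : ℝ → ℝ := fun t => exp (-G t)
  have hq0 : ∀ t, 0 ≤ q t := fun t => (exp_pos _).le
  have hqcont : Continuous q :=
    (continuous_iff_continuousAt.2 fun t => (hG t).continuousAt).neg.rexp
  have hG'cont : Continuous G' := continuous_iff_continuousAt.2 fun t => (hG' t).continuousAt
  have hsqcont : Continuous fun t => G' t ^ 2 * q t := (hG'cont.pow 2).mul hqcont
  have hderiv : ∀ t, HasDerivAt (fun s => G' s * q s) (G'' t * q t - G' t ^ 2 * q t) t :=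
    fun t => ((hG' t).mul (hasDerivAt_exp_neg hG t)).congr_deriv (by ring)
  have hftc := intervalIntegral.integral_eq_sub_of_hasDerivAt (fun t _ => hderiv t)
    (((hG''cont.mul hqcont).sub hsqcont).intervalIntegrable a b)
  rw [intervalIntegral.integral_sub (f := fun t => G'' t * q t)
    ((hG''cont.mul hqcont).intervalIntegrable a b) (hsqcont.intervalIntegrable a b)] at hftc
  have hG''q : ∫ t in a..b, G'' t * q t ≤ L * ∫ t, q t :=
    calc ∫ t in a..b, G'' t * q t ≤ ∫ t in a..b, L * q t :=
          intervalIntegral.integral_mono_on hab ((hG''cont.mul hqcont).intervalIntegrable a b)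
            ((continuous_const.mul hqcont).intervalIntegrable a b)
            fun t _ => mul_le_mul_of_nonneg_right (hG''le t) (hq0 t)
      _ = L * ∫ t in Set.Ioc a b, q t := by
          rw [intervalIntegral.integral_const_mul, intervalIntegral.integral_of_le hab]
      _ ≤ L * ∫ t, q t :=
          mul_le_mul_of_nonneg_left (setIntegral_le_integral hq (ae_of_all _ hq0)) hL
  linarith

theorem integral_deriv_sq_mul_exp_neg_le {L : ℝ} (hL : 0 ≤ L)
    (hG : ∀ t, HasDerivAt G (G' t) t) (hG' : ∀ t, HasDerivAt G' (G'' t) t)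
    (hG''cont : Continuous G'') (hG''le : ∀ t, G'' t ≤ L)
    (hq : Integrable fun t => exp (-G t)) :
    Integrable (fun t => G' t ^ 2 * exp (-G t)) ∧
      ∫ t, G' t ^ 2 * exp (-G t) ≤ L * ∫ t, exp (-G t) := by
  set q : ℝ → ℝ := fun t => exp (-G t)
  have hq0 : ∀ t, 0 ≤ q t := fun t => (exp_pos _).le
  have hqcont : Continuous q :=
    (continuous_iff_continuousAt.2 fun t => (hG t).continuousAt).neg.rexp
  have hG'cont : Continuous G' := continuous_iff_continuousAt.2 fun t => (hG' t).continuousAt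
  have hsqcont : Continuous fun t => G' t ^ 2 * q t := (hG'cont.pow 2).mul hqcont
  -- the boundary terms `G' q = -q'` can be made small at both ends since `q` is integrable
  have hsymm : ∀ T : ℝ, 0 ≤ T → ∫ t in -T..T, G' t ^ 2 * q t ≤ L * ∫ t, q t := by
    intro T hT
    refine le_of_forall_pos_le_add fun ε hε => ?_
    obtain ⟨b, hTb, hb⟩ := exists_gt_deriv_lt_of_integrable hq hq0 (hasDerivAt_exp_neg hG)
      (half_pos hε) T
    obtain ⟨a, haT, ha⟩ := exists_lt_neg_lt_deriv_of_integrable hq hq0 (hasDerivAt_exp_neg hG)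
      (half_pos hε) (-T)
    have hmono : ∫ t in -T..T, G' t ^ 2 * q t ≤ ∫ t in a..b, G' t ^ 2 * q t :=
      intervalIntegral.integral_mono_interval haT.le (by linarith) hTb.le
        (ae_of_all _ fun t => mul_nonneg (sq_nonneg _) (hq0 t)) (hsqcont.intervalIntegrable a b)
    linarith [intervalIntegral_deriv_sq_mul_exp_neg_le hL hG hG' hG''cont hG''le hq
      (a := a) (b := b) (by linarith)]
  have hnorm : ∀ n : ℕ, ∫ t in -(n : ℝ)..n, ‖G' t ^ 2 * q t‖ ≤ L * ∫ t, q t := fun n => by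
    simpa only [Real.norm_of_nonneg (mul_nonneg (sq_nonneg _) (hq0 _))] using hsymm n n.cast_nonneg
  have hint : Integrable fun t => G' t ^ 2 * q t :=
    integrable_of_intervalIntegral_norm_bounded _ (fun _ => hsqcont.integrableOn_Ioc)
      (tendsto_neg_atBot_iff.2 tendsto_natCast_atTop_atTop) tendsto_natCast_atTop_atTop
      (Eventually.of_forall hnorm)
  refine ⟨hint, le_of_tendsto (intervalIntegral_tendsto_integral hint
    (tendsto_neg_atBot_iff.2 tendsto_natCast_atTop_atTop) tendsto_natCast_atTop_atTop)
    (Eventually.of_forall fun n => hsymm n n.cast_nonneg)⟩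

theorem integral_deriv_mul_sub_mul_exp_neg (a : ℝ) (hG : ∀ t, HasDerivAt G (G' t) t)
    (hq : Integrable fun t => exp (-G t))
    (hvar : Integrable fun t => (t - a) ^ 2 * exp (-G t))
    (hcross : Integrable fun t => G' t * (t - a) * exp (-G t)) :
    ∫ t, G' t * (t - a) * exp (-G t) = ∫ t, exp (-G t) := by
  have hqcont : Continuous fun t => exp (-G t) :=
    (continuous_iff_continuousAt.2 fun t => (hG t).continuousAt).neg.rexp
  have hq0 : ∀ t, 0 ≤ exp (-G t) := fun t => (exp_pos _).le
  have hfirst : Integrable fun t => (t - a) * exp (-G t) := by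
    simpa using hvar.mul_of_sq_mul (g := fun _ => 1) (by simpa using hq) hq0
      (((continuous_sub_right a).mul continuous_const).mul hqcont).aestronglyMeasurable
  have hderiv : ∀ t, HasDerivAt (fun s => (s - a) * exp (-G s))
      (exp (-G t) - G' t * (t - a) * exp (-G t)) t := fun t =>
    (((hasDerivAt_id t).sub_const a).mul (hasDerivAt_exp_neg hG t)).congr_deriv (by simp; ring)
  have hzero := integral_eq_zero_of_hasDerivAt_of_integrable hderiv (hq.sub hcross) hfirst
  rw [integral_sub hq hcross] at hzero
  linarith

theorem integral_exp_neg_le_mul_integral_sq_sub_mul_exp_neg {L : ℝ} (hL : 0 < L) (a : ℝ)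
    (hG : ∀ t, HasDerivAt G (G' t) t) (hG' : ∀ t, HasDerivAt G' (G'' t) t)
    (hG''cont : Continuous G'') (hG''le : ∀ t, G'' t ≤ L)
    (hq : Integrable fun t => exp (-G t)) (hvar : Integrable fun t => (t - a) ^ 2 * exp (-G t)) :
    ∫ t, exp (-G t) ≤ L * ∫ t, (t - a) ^ 2 * exp (-G t) := by
  obtain ⟨hsq, hsq_le⟩ := integral_deriv_sq_mul_exp_neg_le hL.le hG hG' hG''cont hG''le hq
  have hG'cont : Continuous G' := continuous_iff_continuousAt.2 fun t => (hG' t).continuousAt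
  have hqcont : Continuous fun t => exp (-G t) :=
    (continuous_iff_continuousAt.2 fun t => (hG t).continuousAt).neg.rexp
  have hcross : Integrable fun t => G' t * (t - a) * exp (-G t) :=
    hsq.mul_of_sq_mul hvar (fun t => (exp_pos _).le)
      ((hG'cont.mul (continuous_sub_right a)).mul hqcont).aestronglyMeasurable
  have hibp := integral_deriv_mul_sub_mul_exp_neg a hG hq hvar hcross
  -- AM-GM in place of Cauchy–Schwarz
  have hamgm : ∫ t, 2 * (G' t * (t - a) * exp (-G t)) ≤
      ∫ t, (L⁻¹ * (G' t ^ 2 * exp (-G t)) + L * ((t - a) ^ 2 * exp (-G t))) := by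
    refine integral_mono (hcross.const_mul 2) ((hsq.const_mul _).add (hvar.const_mul _)) fun t => ?_
    have hsquare : 0 ≤ (G' t - L * (t - a)) ^ 2 * exp (-G t) := by positivity
    field_simp
    nlinarith [hsquare]
  rw [integral_const_mul, integral_add (hsq.const_mul _) (hvar.const_mul _), integral_const_mul,
    integral_const_mul, hibp] at hamgm
  have : L⁻¹ * ∫ t, G' t ^ 2 * exp (-G t) ≤ ∫ t, exp (-G t) := by
    rw [inv_mul_le_iff₀ hL]; exact hsq_le
  linarith

end OneDimensional

theorem MeasureTheory.MeasurePreserving.integral_le_of_slice_le {α β γ : Type*}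
    [MeasurableSpace α] [MeasurableSpace β] [MeasurableSpace γ] {μ : Measure α} {ν : Measure β}
    {μγ : Measure γ} [SFinite μ] [SFinite ν] {Ψ : α × β ≃ᵐ γ}
    (hΨ : MeasurePreserving Ψ (μ.prod ν) μγ) {F H : γ → ℝ} (hF : Integrable F μγ)
    (hH : Integrable H μγ)
    (hle : ∀ w, Integrable (fun t => F (Ψ (t, w))) μ → Integrable (fun t => H (Ψ (t, w))) μ →
      ∫ t, F (Ψ (t, w)) ∂μ ≤ ∫ t, H (Ψ (t, w)) ∂μ) :
    ∫ x, F x ∂μγ ≤ ∫ x, H x ∂μγ := by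
  have hF' : Integrable (fun p => F (Ψ p)) (μ.prod ν) :=
    (hΨ.integrable_comp_emb Ψ.measurableEmbedding).2 hF
  have hH' : Integrable (fun p => H (Ψ p)) (μ.prod ν) :=
    (hΨ.integrable_comp_emb Ψ.measurableEmbedding).2 hH
  rw [← hΨ.integral_comp Ψ.measurableEmbedding, ← hΨ.integral_comp Ψ.measurableEmbedding,
    integral_prod_symm _ hF', integral_prod_symm _ hH']
  refine integral_mono_ae hF'.integral_prod_right hH'.integral_prod_right ?_
  filter_upwards [hF'.prod_left_ae, hH'.prod_left_ae] with w hFw hHw using hle w hFw hHw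

theorem hasDerivAt_comp_add_smul {E F : Type*} [NormedAddCommGroup E] [NormedSpace ℝ E]
    [NormedAddCommGroup F] [NormedSpace ℝ F] {g : E → F} {x v : E} {t : ℝ}
    (hg : DifferentiableAt ℝ g (x + t • v)) :
    HasDerivAt (fun s : ℝ => g (x + s • v)) (fderiv ℝ g (x + t • v) v) t :=
  hg.hasFDerivAt.comp_hasDerivAt t (by simpa using ((hasDerivAt_id t).smul_const v).const_add x)

theorem ContDiff.hasDerivAt_fderiv_comp_add_smul {E : Type*} [NormedAddCommGroup E]
    [NormedSpace ℝ E] {f : E → ℝ} (hf : ContDiff ℝ 2 f) (x v : E) (t : ℝ) :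
    HasDerivAt (fun s : ℝ => fderiv ℝ f (x + s • v) v)
      (iteratedFDeriv ℝ 2 f (x + t • v) ![v, v]) t := by
  have hdiff : Differentiable ℝ (fderiv ℝ f) :=
    (hf.fderiv_right (m := 1) le_rfl).differentiable one_ne_zero
  simpa [iteratedFDeriv_two_apply] using
    (hasDerivAt_comp_add_smul (hdiff _)).clm_apply (hasDerivAt_const t v)

section InnerProductSpace

variable {E : Type*} [NormedAddCommGroup E] [InnerProductSpace ℝ E] [FiniteDimensional ℝ E]
  [MeasurableSpace E] [BorelSpace E]

theorem exists_measurePreserving_add_smul {n : ℕ} (hn : Module.finrank ℝ E = n + 1) {v : E}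
    (hv : ‖v‖ = 1) :
    ∃ Ψ : ℝ × (Fin n → ℝ) ≃ᵐ E, MeasurePreserving Ψ ((volume : Measure ℝ).prod volume) volume ∧
      ∀ t w, Ψ (t, w) = Ψ (0, w) + t • v := by
  obtain ⟨b, hb⟩ : ∃ b : OrthonormalBasis (Fin (n + 1)) ℝ E, b 0 = v := by
    have horth : Orthonormal ℝ (({0} : Set (Fin (n + 1))).domRestrict fun _ => v) :=
      ⟨fun _ => hv, fun i j hij => (hij (Subtype.ext (i.2.trans j.2.symm))).elim⟩
    obtain ⟨b, hb⟩ := horth.exists_orthonormalBasis_extension_of_card_eq (by simpa using hn)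
    exact ⟨b, hb 0 rfl⟩
  let e := MeasurableEquiv.piFinSuccAbove (fun _ : Fin (n + 1) => ℝ) 0
  refine ⟨(e.symm.trans (MeasurableEquiv.toLp 2 _)).trans
    b.repr.toHomeomorph.toMeasurableEquiv.symm, ?_, fun t w => ?_⟩
  · rw [← Measure.volume_eq_prod]
    exact b.measurePreserving_repr_symm.comp
      (((EuclideanSpace.volume_preserving_symm_measurableEquiv_toLp _).symm _).comp
        ((volume_preserving_piFinSuccAbove (fun _ : Fin (n + 1) => ℝ) 0).symm _))
  · have hsplit : (MeasurableEquiv.toLp 2 _ (e.symm (t, w)) : EuclideanSpace ℝ (Fin (n + 1))) =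
        MeasurableEquiv.toLp 2 _ (e.symm (0, w)) + t • EuclideanSpace.single 0 1 := by
      ext j
      induction j using Fin.cases with
      | zero => simp [e, MeasurableEquiv.piFinSuccAbove]
      | succ k => simp [e, MeasurableEquiv.piFinSuccAbove, Fin.succ_ne_zero]
    change b.repr.symm (MeasurableEquiv.toLp 2 _ (e.symm (t, w))) =
      b.repr.symm (MeasurableEquiv.toLp 2 _ (e.symm (0, w))) + t • v
    rw [hsplit, map_add, map_smul, OrthonormalBasis.repr_symm_single, hb]

theorem integral_exp_neg_le_mul_integral_inner_sq {f : E → ℝ} {L : ℝ} (hL : 0 < L)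
    (hf : ContDiff ℝ 2 f) {v : E} (hv : ‖v‖ = 1)
    (hhess : ∀ x, iteratedFDeriv ℝ 2 f x ![v, v] ≤ L) (m : E)
    (hq : Integrable fun x => exp (-f x))
    (hvar : Integrable fun x => ⟪v, x - m⟫ ^ 2 * exp (-f x)) :
    ∫ x, exp (-f x) ≤ L * ∫ x, ⟪v, x - m⟫ ^ 2 * exp (-f x) := by
  have : Nontrivial E := nontrivial_of_ne v 0 (by rintro rfl; simp at hv)
  obtain ⟨n, hn⟩ := Nat.exists_eq_succ_of_ne_zero (Module.finrank_pos (R := ℝ) (M := E)).ne'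
  obtain ⟨Ψ, hΨ, hline⟩ := exists_measurePreserving_add_smul hn hv
  rw [← integral_const_mul]
  refine hΨ.integral_le_of_slice_le hq (hvar.const_mul L) fun w hqw hvarw => ?_
  obtain ⟨x₀, hx₀⟩ : ∃ x₀, ∀ t, Ψ (t, w) = x₀ + t • v := ⟨_, fun t => hline t w⟩
  have hinner : ∀ t : ℝ, ⟪v, x₀ + t • v - m⟫ = t - -⟪v, x₀ - m⟫ := fun t => by
    rw [add_sub_right_comm, inner_add_right, real_inner_smul_right, real_inner_self_eq_norm_sq,
      hv]
    ring
  simp only [hx₀, hinner, integral_const_mul] at hqw hvarw ⊢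
  have hcont : Continuous fun x => iteratedFDeriv ℝ 2 f x ![v, v] :=
    (continuous_eval_const _).comp (hf.continuous_iteratedFDeriv le_rfl)
  exact integral_exp_neg_le_mul_integral_sq_sub_mul_exp_neg hL _
    (fun t => hasDerivAt_comp_add_smul (hf.differentiable two_ne_zero _))
    (hf.hasDerivAt_fderiv_comp_add_smul _ v)
    (hcont.comp (continuous_const.add (continuous_id.smul continuous_const))) (fun t => hhess _)
    hqw ((integrable_const_mul_iff (isUnit_iff_ne_zero.2 hL.ne') _).1 hvarw)

end InnerProductSpace

theorem MeasureTheory.Integrable.inner_sub_sq_mul {E : Type*} [NormedAddCommGroup E]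
    [InnerProductSpace ℝ E] [MeasurableSpace E] [OpensMeasurableSpace E] {μ : Measure E}
    {ρ : E → ℝ} (hρ : Integrable ρ μ) (hρ0 : ∀ x, 0 ≤ ρ x)
    (hmom : Integrable (fun x => ‖x‖ ^ 2 * ρ x) μ) (v m : E) :
    Integrable (fun x => ⟪v, x - m⟫ ^ 2 * ρ x) μ := by
  refine ((hmom.const_mul (2 * ‖v‖ ^ 2)).add (hρ.const_mul (2 * ‖v‖ ^ 2 * ‖m‖ ^ 2))).mono
    (((continuous_const.inner (continuous_id.sub continuous_const)).pow 2).aestronglyMeasurable.mul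
      hρ.1) (ae_of_all _ fun x => ?_)
  have hinner : ⟪v, x - m⟫ ^ 2 ≤ 2 * ‖v‖ ^ 2 * ‖x‖ ^ 2 + 2 * ‖v‖ ^ 2 * ‖m‖ ^ 2 :=
    calc ⟪v, x - m⟫ ^ 2 ≤ (‖v‖ * ‖x - m‖) ^ 2 := by
          rw [← sq_abs]; gcongr; exact abs_real_inner_le_norm v (x - m)
      _ ≤ (‖v‖ * (‖x‖ + ‖m‖)) ^ 2 := by gcongr; exact norm_sub_le x m
      _ ≤ 2 * ‖v‖ ^ 2 * ‖x‖ ^ 2 + 2 * ‖v‖ ^ 2 * ‖m‖ ^ 2 := by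
          nlinarith [sq_nonneg (‖v‖ * (‖x‖ - ‖m‖))]
  have hρx := hρ0 x
  simp only [Pi.add_apply, Real.norm_of_nonneg (mul_nonneg (sq_nonneg _) hρx)]
  rw [Real.norm_of_nonneg (by positivity)]
  nlinarith

/-- Brascamp–Lieb-type covariance lower bound: if
`-∇² log ρ ⪯ L I_d`, then `Cov_ρ(X) ⪰ (1/L) I_d`. -/
theorem covariance_lower_bound (d : ℕ) (ρ fpot : Vec d → ℝ) (L : ℝ)
    (hL : 0 < L)
    (hprop : ∃ Z : ℝ, 0 < Z ∧ ∀ x, ρ x = Z⁻¹ * Real.exp (-fpot x))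
    (hC2 : ContDiff ℝ 2 fpot)
    (hhess : ∀ x v : Vec d, hessQ d fpot x v ≤ L * ‖v‖ ^ 2)
    (hint : ∫ x, ρ x = 1)
    (hmom : Integrable (fun x : Vec d => ‖x‖ ^ 2 * ρ x)) :
    ∀ v : Vec d, ‖v‖ ^ 2 / L ≤ ∫ x, ⟪v, x - ∫ y, ρ y • y⟫ ^ 2 * ρ x := by
  obtain ⟨Z, hZ, hρ⟩ := hprop
  have hρg : ∀ x, exp (-(fpot x + log Z)) = ρ x := fun x => by
    rw [hρ, neg_add, exp_add, exp_neg (log Z), exp_log hZ, mul_comm]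
  have hhess_g : ∀ x v, iteratedFDeriv ℝ 2 (fun y => fpot y + log Z) x ![v, v] = hessQ d fpot x v :=
    fun x v => by
      rw [hessQ, iteratedFDeriv_two_apply, iteratedFDeriv_two_apply,
        show fderiv ℝ (fun y => fpot y + log Z) = fderiv ℝ fpot from
          funext fun _ => fderiv_add_const _]
  have hρint : Integrable ρ := Integrable.of_integral_ne_zero (by rw [hint]; exact one_ne_zero)
  have hρ0 : ∀ x, 0 ≤ ρ x := fun x => by rw [← hρg]; exact (exp_pos _).le
  intro v
  rcases eq_or_ne v 0 with rfl | hv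
  · simp
  set m := ∫ y, ρ y • y
  set u := ‖v‖⁻¹ • v
  have hu : ‖u‖ = 1 := norm_smul_inv_norm hv
  have hbound := integral_exp_neg_le_mul_integral_inner_sq hL (hC2.add contDiff_const) hu
    (fun x => (hhess_g x u).trans_le (by simpa [hu] using hhess x u)) m
    (by simpa only [hρg] using hρint)
    (by simpa only [hρg] using hρint.inner_sub_sq_mul hρ0 hmom u m)
  simp only [hρg, hint] at hbound
  have hscale : ∀ x, ⟪v, x - m⟫ ^ 2 * ρ x = ‖v‖ ^ 2 * (⟪u, x - m⟫ ^ 2 * ρ x) := fun x => by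
    rw [real_inner_smul_left]; field_simp [norm_ne_zero_iff.2 hv]
  simp_rw [hscale, integral_const_mul]
  rw [div_le_iff₀ hL]
  nlinarith [mul_le_mul_of_nonneg_left hbound (sq_nonneg ‖v‖)]
end
end
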